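/- Assume δ < 2. Then there exists a sequence (v^k)_{k∈ℕ} of H-valued random variables such that, P-almost surely: (i) for every k ∈ ℕ, v^k is a subgradient of F at x̄^{k+1}, i.e. F(z) ≥ F(x̄^{k+1}) + ⟨v^k, z − x̄^{k+1}⟩ for every z ∈ H; and (ii) v^k → 0 and x^k − x̄^{k+1} → 0 strongly in H as k → ∞. -/

import Mathlib

open MeasureTheory ProbabilityTheory Filter Topology Set
open scoped BigOperators RealInnerProductSpace ENNReal

noncomputable section

set_option synthInstance.maxHeartbeats 400000
set_option maxHeartbeats 1000000

variable {m : ℕ} {H : Fin m → Type*}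
  [∀ i, NormedAddCommGroup (H i)] [∀ i, InnerProductSpace ℝ (H i)]

/-- The Hilbert direct sum `H = H₁ ⊕ ⋯ ⊕ H_m` is complete when each factor is. -/
instance [∀ i, CompleteSpace (H i)] : CompleteSpace (PiLp 2 H) :=
  inferInstance

/-- Weighted squared norm `∑ i, w i * ‖u i‖²` on the direct sum. -/
def wnormSq (w : Fin m → ℝ) (u : PiLp 2 H) : ℝ := ∑ i, w i * ‖u i‖ ^ 2

/-- Weighted inner product `∑ i, w i * ⟪u i, v i⟫` on the direct sum. -/
def winner (w : Fin m → ℝ) (u v : PiLp 2 H) : ℝ := ∑ i, w i * ⟪u i, v i⟫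

/-- `upd x i u` replaces the `i`-th coordinate of `x` by `u`. -/
def upd (x : PiLp 2 H) (i : Fin m) (u : H i) : PiLp 2 H := WithLp.toLp 2 (Function.update x i u)

/-- `IsProx c gi v pt` asserts that `pt` is the unique minimizer of
`u ↦ gi u + (1/(2c))‖u − v‖²`, i.e. `pt = prox_{c·gi}(v)`. -/
def IsProx {E : Type*} [NormedAddCommGroup E] (c : ℝ) (gi : E → ℝ) (v pt : E) : Prop :=
  (∀ u : E, gi pt + 1 / (2 * c) * ‖pt - v‖ ^ 2 ≤ gi u + 1 / (2 * c) * ‖u - v‖ ^ 2) ∧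
  (∀ u : E, gi u + 1 / (2 * c) * ‖u - v‖ ^ 2 ≤ gi pt + 1 / (2 * c) * ‖pt - v‖ ^ 2 → u = pt)

/-- The objective `F = f + g`, where `g x = ∑ i, g i (x i)`. -/
def Fobj (f : PiLp 2 H → ℝ) (g : ∀ i, H i → ℝ) (z : PiLp 2 H) : ℝ := f z + ∑ i, g i (z i)

/-- Delayed iterate `x̂^k`, coordinate `j` reads `x^{k - d^k_j}` (deterministic trajectory,
indices in `ℤ`, with `x^n = x^0` for `n ≤ 0`). -/
def xhatD (x : ℤ → PiLp 2 H) (d : ℕ → Fin m → ℕ) (k : ℕ) : PiLp 2 H :=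
  WithLp.toLp 2 (fun j => x ((k : ℤ) - d k j) j)

/-- Delayed iterate `x̂^k` (random trajectory). -/
def xhatP {Ω : Type*} (x : ℤ → Ω → PiLp 2 H) (d : ℕ → Fin m → ℕ) (k : ℕ) (ω : Ω) :
    PiLp 2 H :=
  WithLp.toLp 2 (fun j => x ((k : ℤ) - d k j) ω j)

/-- `alphaT c τ x k = c * ∑_{h=k-τ}^{k-1} (h-(k-τ)+1) ‖x^{h+1} - x^h‖²`. -/
def alphaT (c : ℝ) (τ : ℕ) (x : ℤ → PiLp 2 H) (k : ℕ) : ℝ :=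
  c * ∑ j ∈ Finset.range τ,
    ((j : ℝ) + 1) * ‖x ((k : ℤ) - τ + j + 1) - x ((k : ℤ) - τ + j)‖ ^ 2

/-- `alphaV p c τ x k ω = c * ∑_{h=k-τ}^{k-1} (h-(k-τ)+1) ‖x^{h+1} - x^h‖²_V`. -/
def alphaV {Ω : Type*} (p : Fin m → ℝ) (c : ℝ) (τ : ℕ) (x : ℤ → Ω → PiLp 2 H)
    (k : ℕ) (ω : Ω) : ℝ :=
  c * ∑ j ∈ Finset.range τ,
    ((j : ℝ) + 1) * wnormSq p (x ((k : ℤ) - τ + j + 1) ω - x ((k : ℤ) - τ + j) ω)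

/-- The constant `L_res^V/(2√p_max)` appearing in `α_k`, where `L_res^V = L_res √(p_max/p_min)`. -/
def alphaConst (Lres pmax pmin : ℝ) : ℝ :=
  Lres * Real.sqrt (pmax / pmin) / (2 * Real.sqrt pmax)

/-- The σ-algebra generated by `i_0, …, i_{k-1}`. -/
def pastFiltration {Ω : Type*} [MeasurableSpace Ω] (idx : ℕ → Ω → Fin m) (k : ℕ) :
    MeasurableSpace Ω :=
  ⨆ j ∈ Finset.range k, MeasurableSpace.comap (idx j) ⊤

/-- The random index set `J(k) = {h ∈ {k-τ,…,k-1} : d^k_{i_h} ≥ k-h}`. -/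
def Jset {Ω : Type*} (idx : ℕ → Ω → Fin m) (d : ℕ → Fin m → ℕ) (τ k : ℕ) (ω : Ω) :
    Finset ℕ :=
  (Finset.Ico (k - τ) k).filter fun h => k - h ≤ d k (idx h ω)


/-!
Each iteration is a block forward–backward step with a stale gradient. The block descent lemma
and the optimality of the prox step bound `F(x^{k+1})` by `F(x^k)` minus a multiple of
`‖x̄^{k+1}_{i_k} - x^k_{i_k}‖²`, up to the error `∇f(x^k) - ∇f(x̂^k)`, which the residual
Lipschitz constant bounds by the last `τ` increments of the iterates. Since `x^k` and `x̄^{k+1}`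
are functions of `i_0, …, i_{k-1}` only, averaging over the independent index `i_k` turns this into
a descent inequality for `E F(x^k)` in terms of `E ‖x̄^{k+1} - x^k‖²_p`; the delayed errors are
absorbed into a Lyapunov sequence, and since `δ < 2` a positive multiple of
`∑ₖ E ‖x̄^{k+1} - x^k‖²_p` is bounded by `F(x^0) - F*`. Hence `x^k - x̄^{k+1} → 0` almost surely, and the prox
optimality condition exhibits `v^k = γ⁻¹(x^k - x̄^{k+1}) + ∇f(x̄^{k+1}) - ∇f(x̂^k)` as a subgradient
of `F` at `x̄^{k+1}` that tends to `0` together with the increments.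
-/

set_option linter.unusedSectionVars false

section Calculus

lemma le_add_deriv_add_half_of_deriv_le {φ φ' : ℝ → ℝ} (hφ : ∀ t, HasDerivAt φ (φ' t) t)
    {K : ℝ} (hK : ∀ t ∈ Ico (0 : ℝ) 1, φ' t ≤ φ' 0 + K * t) :
    φ 1 ≤ φ 0 + φ' 0 + K / 2 := by
  set B : ℝ → ℝ := fun t => φ 0 + t * φ' 0 + K * t ^ 2 / 2
  have hB : ∀ t, HasDerivAt B (φ' 0 + K * t) t := fun t => by
    have h : HasDerivAt B (0 + 1 * φ' 0 + K * (2 * t ^ 1) / 2) t :=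
      ((hasDerivAt_const t (φ 0)).add ((hasDerivAt_id t).mul_const (φ' 0))).add
        (((hasDerivAt_pow 2 t).const_mul K).div_const 2)
    convert h using 1
    ring
  have := image_le_of_deriv_right_le_deriv_boundary
    (fun t _ => (hφ t).continuousAt.continuousWithinAt) (fun t _ => (hφ t).hasDerivWithinAt)
    (by simp [B]) (fun t _ => (hB t).continuousAt.continuousWithinAt)
    (fun t _ => (hB t).hasDerivWithinAt) hK (right_mem_Icc.2 zero_le_one)
  simpa [B] using this

variable {E : Type*} [NormedAddCommGroup E]

lemma IsProx.eq {c : ℝ} {gi : E → ℝ} {v p q : E} (hp : IsProx c gi v p) (hq : IsProx c gi v q) :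
    p = q :=
  hq.2 p (hp.1 q)

variable [InnerProductSpace ℝ E]

lemma HasGradientAt.hasDerivAt_comp_add_smul [CompleteSpace E] {f : E → ℝ} {f' x w : E} {t : ℝ}
    (hf : HasGradientAt f f' (x + t • w)) :
    HasDerivAt (fun s : ℝ => f (x + s • w)) ⟪f', w⟫ t := by
  have := hf.hasFDerivAt.comp_hasDerivAt t (((hasDerivAt_id t).smul_const w).const_add x)
  simpa [Function.comp_def] using this

lemma ConvexOn.add_inner_le_of_hasGradientAt [CompleteSpace E] {f : E → ℝ}
    (hf : ConvexOn ℝ univ f) {x f' : E} (hgrad : HasGradientAt f f' x) (z : E) :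
    f x + ⟪f', z - x⟫ ≤ f z := by
  have hconv : ConvexOn ℝ univ fun s : ℝ => f (x + s • (z - x)) := by
    have hline : f ∘ AffineMap.lineMap x z = fun s : ℝ => f (x + s • (z - x)) := by
      ext s
      simp [AffineMap.lineMap_apply, add_comm]
    simpa [hline] using hf.comp_affineMap (AffineMap.lineMap x z)
  have hderiv := HasGradientAt.hasDerivAt_comp_add_smul (t := 0) (w := z - x) (by simpa using hgrad)
  have := hconv.le_slope_of_hasDerivAt (mem_univ 0) (mem_univ 1) zero_lt_one hderiv
  simp [slope_def_field] at this
  linarith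

lemma le_add_inner_add_half_of_inner_sub_le [CompleteSpace E] {f : E → ℝ} {f' : E → E}
    (hf : ∀ z, HasGradientAt f (f' z) z) (x w : E) {K : ℝ}
    (hK : ∀ t ∈ Ico (0 : ℝ) 1, ⟪f' (x + t • w) - f' x, w⟫ ≤ K * t) :
    f (x + w) ≤ f x + ⟪f' x, w⟫ + K / 2 := by
  have := le_add_deriv_add_half_of_deriv_le (φ := fun t => f (x + t • w))
    (fun t => (hf _).hasDerivAt_comp_add_smul) (K := K) fun t ht => by
      have := hK t ht
      rw [inner_sub_left] at this
      simp only [zero_smul, add_zero]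
      linarith
  simpa using this

lemma IsProx.add_inner_le {c : ℝ} (hc : 0 < c) {gi : E → ℝ} (hgi : ConvexOn ℝ univ gi)
    {v p : E} (hp : IsProx c gi v p) (z : E) :
    gi p + c⁻¹ * ⟪v - p, z - p⟫ ≤ gi z := by
  set a := 1 / (2 * c)
  have key : ∀ t ∈ Ioo (0 : ℝ) 1, gi p + c⁻¹ * ⟪v - p, z - p⟫ ≤ gi z + a * t * ‖z - p‖ ^ 2 := by
    rintro t ⟨ht0, ht1⟩
    have hmin := hp.1 (p + t • (z - p))
    have hconv : gi (p + t • (z - p)) ≤ (1 - t) * gi p + t * gi z := by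
      have h := hgi.2 (mem_univ p) (mem_univ z) (by linarith : (0 : ℝ) ≤ 1 - t) ht0.le (by ring)
      rwa [show (1 - t) • p + t • z = p + t • (z - p) by module] at h
    have hnorm : ‖p + t • (z - p) - v‖ ^ 2
        = ‖p - v‖ ^ 2 + 2 * t * ⟪p - v, z - p⟫ + t ^ 2 * ‖z - p‖ ^ 2 := by
      rw [show p + t • (z - p) - v = (p - v) + t • (z - p) by abel, norm_add_sq_real,
        real_inner_smul_right, norm_smul, Real.norm_eq_abs, mul_pow, sq_abs]
      ring
    have hinner : ⟪v - p, z - p⟫ = -⟪p - v, z - p⟫ := by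
      rw [← inner_neg_left, neg_sub]
    have hca : c⁻¹ = 2 * a := by simp only [a]; field_simp
    rw [hnorm] at hmin
    rw [hinner, hca]
    nlinarith
  have hlim : Tendsto (fun t => gi z + a * t * ‖z - p‖ ^ 2) (𝓝[>] 0) (𝓝 (gi z)) := by
    have : Continuous fun t => gi z + a * t * ‖z - p‖ ^ 2 := by fun_prop
    simpa using (this.tendsto 0).mono_left nhdsWithin_le_nhds
  refine ge_of_tendsto hlim ?_
  filter_upwards [Ioo_mem_nhdsGT zero_lt_one] with t ht using key t ht

end Calculus

section Blocks

lemma upd_apply_self (x : PiLp 2 H) (i : Fin m) (u : H i) : upd x i u i = u :=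
  Function.update_self i u x

lemma upd_apply_of_ne (x : PiLp 2 H) (i : Fin m) (u : H i) {j : Fin m} (hj : j ≠ i) :
    upd x i u j = x j :=
  Function.update_of_ne hj u x

lemma upd_self (x : PiLp 2 H) (i : Fin m) : upd x i (x i) = x :=
  congrArg (WithLp.toLp 2) (Function.update_eq_self i x.ofLp)

lemma upd_sub_self (x : PiLp 2 H) (i : Fin m) (u : H i) :
    upd x i u - x = PiLp.single 2 i (u - x i) := by
  ext j
  rcases eq_or_ne j i with rfl | hj
  · simp [upd_apply_self]
  · simp [upd_apply_of_ne x i u hj, Pi.single_eq_of_ne hj]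

lemma norm_upd_sub_self (x : PiLp 2 H) (i : Fin m) (u : H i) :
    ‖upd x i u - x‖ = ‖u - x i‖ := by
  rw [upd_sub_self, PiLp.norm_single]

lemma inner_upd_sub_self (w x : PiLp 2 H) (i : Fin m) (u : H i) :
    ⟪w, upd x i u - x⟫ = ⟪w i, u - x i⟫ := by
  rw [PiLp.inner_apply, Finset.sum_eq_single i]
  · simp [upd_apply_self]
  · intro j _ hj
    simp [upd_apply_of_ne x i u hj]
  · simp

lemma add_smul_upd_sub_self (x : PiLp 2 H) (i : Fin m) (u : H i) (t : ℝ) :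
    x + t • (upd x i u - x) = upd x i (x i + t • (u - x i)) := by
  ext j
  rcases eq_or_ne j i with rfl | hj
  · simp [upd_apply_self]
  · simp [upd_apply_of_ne _ _ _ hj]

lemma norm_le_sum_norm_apply (u : PiLp 2 H) : ‖u‖ ≤ ∑ i, ‖u i‖ := by
  refine abs_le_of_sq_le_sq' ?_ (by positivity) |>.2
  rw [PiLp.norm_sq_eq_of_L2]
  exact Finset.sum_sq_le_sq_sum_of_nonneg fun _ _ => norm_nonneg _

lemma sum_norm_apply_le (u : PiLp 2 H) : ∑ i, ‖u i‖ ≤ m * ‖u‖ := by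
  simpa using Finset.sum_le_sum fun i (_ : i ∈ Finset.univ) => PiLp.norm_apply_le u i

lemma sum_norm_apply_eq_norm {u : PiLp 2 H} {i : Fin m} (hu : ∀ j ≠ i, u j = 0) :
    ∑ j, ‖u j‖ = ‖u‖ := by
  have hsingle : u = PiLp.single 2 i (u i) := by
    ext j
    rcases eq_or_ne j i with rfl | hj
    · simp
    · simp [hu j hj, Pi.single_eq_of_ne hj]
  rw [Finset.sum_eq_single i (fun j _ hj => by simp [hu j hj]) (by simp), hsingle,
    PiLp.norm_single, PiLp.single_eq_same]

lemma mul_norm_sq_le_wnormSq {w : Fin m → ℝ} {c : ℝ} (hc : ∀ i, c ≤ w i) (u : PiLp 2 H) :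
    c * ‖u‖ ^ 2 ≤ wnormSq w u := by
  rw [PiLp.norm_sq_eq_of_L2, Finset.mul_sum]
  exact Finset.sum_le_sum fun i _ => mul_le_mul_of_nonneg_right (hc i) (sq_nonneg _)

lemma winner_le {w : Fin m → ℝ} {c : ℝ} (hc : 0 ≤ c) (hw0 : ∀ i, 0 ≤ w i) (hwc : ∀ i, w i ≤ c)
    (u v : PiLp 2 H) : winner w u v ≤ c * (‖u‖ * ‖v‖) :=
  calc winner w u v ≤ ∑ i, c * (‖u i‖ * ‖v i‖) :=
        Finset.sum_le_sum fun i _ =>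
          (mul_le_mul_of_nonneg_left (real_inner_le_norm _ _) (hw0 i)).trans
            (mul_le_mul_of_nonneg_right (hwc i) (by positivity))
    _ ≤ c * (‖u‖ * ‖v‖) := by
        rw [← Finset.mul_sum]
        gcongr
        simpa [← PiLp.norm_eq_of_L2] using
          Real.sum_mul_le_sqrt_mul_sqrt Finset.univ (fun i => ‖u i‖) fun i => ‖v i‖

lemma tendsto_norm_of_summable_wnormSq {p : Fin m → ℝ} {pmin : ℝ} (hpmin : 0 < pmin)
    (hpmin_le : ∀ i, pmin ≤ p i) {u : ℕ → PiLp 2 H} (hu : Summable fun k => wnormSq p (u k)) :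
    Tendsto (fun k => ‖u k‖) atTop (𝓝 0) := by
  have hsq : Tendsto (fun k => ‖u k‖ ^ 2) atTop (𝓝 0) := by
    refine squeeze_zero (fun _ => sq_nonneg _) (fun k => ?_)
      (by simpa using hu.tendsto_atTop_zero.div_const pmin)
    rw [le_div_iff₀ hpmin, mul_comm]
    exact mul_norm_sq_le_wnormSq hpmin_le _
  simpa [Function.comp_def] using (Real.continuous_sqrt.tendsto 0).comp hsq

end Blocks

section BlockDescent

variable {f : PiLp 2 H → ℝ} {f' : PiLp 2 H → PiLp 2 H} {g : ∀ i, H i → ℝ}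

lemma sum_apply_upd (φ : ∀ i, H i → ℝ) (x : PiLp 2 H) (i : Fin m) (u : H i) :
    ∑ j, φ j (upd x i u j) = ∑ j, φ j (x j) + (φ i u - φ i (x i)) := by
  rw [← sub_eq_iff_eq_add', ← Finset.sum_sub_distrib, Finset.sum_eq_single i]
  · rw [upd_apply_self]
  · intro j _ hj
    rw [upd_apply_of_ne x i u hj, sub_self]
  · simp

lemma le_add_inner_apply_upd [∀ i, CompleteSpace (H i)] (hf : ∀ z, HasGradientAt f (f' z) z)
    (x : PiLp 2 H) (i : Fin m) {Li : ℝ}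
    (hlip : ∀ u u' : H i, ‖f' (upd x i u) i - f' (upd x i u') i‖ ≤ Li * ‖u - u'‖) (u : H i) :
    f (upd x i u) ≤ f x + ⟪f' x i, u - x i⟫ + Li / 2 * ‖u - x i‖ ^ 2 := by
  have h := le_add_inner_add_half_of_inner_sub_le hf x (upd x i u - x)
    (K := Li * ‖u - x i‖ ^ 2) fun t ht => by
      rw [add_smul_upd_sub_self, inner_upd_sub_self, PiLp.sub_apply]
      calc ⟪f' (upd x i (x i + t • (u - x i))) i - f' x i, u - x i⟫
          ≤ ‖f' (upd x i (x i + t • (u - x i))) i - f' x i‖ * ‖u - x i‖ := real_inner_le_norm _ _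
        _ ≤ Li * ‖t • (u - x i)‖ * ‖u - x i‖ := by
          gcongr
          simpa [upd_self] using hlip (x i + t • (u - x i)) (x i)
        _ = Li * ‖u - x i‖ ^ 2 * t := by
          rw [norm_smul, Real.norm_of_nonneg ht.1]
          ring
  rw [add_sub_cancel, inner_upd_sub_self] at h
  linarith

lemma Fobj_upd_le [∀ i, CompleteSpace (H i)] (hf : ∀ z, HasGradientAt f (f' z) z)
    {x xh : PiLp 2 H} {i : Fin m} (hgi : ConvexOn ℝ univ (g i)) {γi Li : ℝ} (hγi : 0 < γi)
    (hlip : ∀ u u' : H i, ‖f' (upd x i u) i - f' (upd x i u') i‖ ≤ Li * ‖u - u'‖) {xb : H i}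
    (hprox : IsProx γi (g i) (x i - γi • f' xh i) xb) :
    Fobj f g (upd x i xb)
      ≤ Fobj f g x - (γi⁻¹ - Li / 2) * ‖xb - x i‖ ^ 2 + ⟪f' x i - f' xh i, xb - x i⟫ := by
  have hdesc := le_add_inner_apply_upd hf x i hlip xb
  have hsub := hprox.add_inner_le hγi hgi (x i)
  have hinner : ⟪x i - γi • f' xh i - xb, x i - xb⟫
      = ‖xb - x i‖ ^ 2 + γi * ⟪f' xh i, xb - x i⟫ := by
    rw [show x i - γi • f' xh i - xb = -(xb - x i) - γi • f' xh i by abel,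
      show x i - xb = -(xb - x i) by abel, inner_sub_left, inner_neg_neg,
      real_inner_self_eq_norm_sq, inner_neg_right, real_inner_smul_left]
    ring
  rw [hinner, mul_add, ← mul_assoc, inv_mul_cancel₀ hγi.ne', one_mul] at hsub
  rw [Fobj, Fobj, sum_apply_upd, inner_sub_left]
  linarith

lemma norm_sub_le_mul_sum_norm_sub_apply {F : Type*} [SeminormedAddCommGroup F]
    {φ : PiLp 2 H → F} {K : ℝ}
    (hφ : ∀ (z : PiLp 2 H) (i : Fin m) (u u' : H i),
      ‖φ (upd z i u) - φ (upd z i u')‖ ≤ K * ‖u - u'‖)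
    (a b : PiLp 2 H) : ‖φ a - φ b‖ ≤ K * ∑ i, ‖a i - b i‖ := by
  suffices ∀ s : Finset (Fin m), ∀ a b : PiLp 2 H, (∀ j ∉ s, a j = b j) →
      ‖φ a - φ b‖ ≤ K * ∑ i ∈ s, ‖a i - b i‖ from this Finset.univ a b (by simp)
  intro s
  induction s using Finset.induction_on with
  | empty =>
    intro a b hab
    simp [show a = b from PiLp.ext fun j => hab j (Finset.notMem_empty j)]
  | insert i s hi IH =>
    intro a b hab
    set a' := upd a i (b i)
    have h1 : ‖φ a - φ a'‖ ≤ K * ‖a i - b i‖ := by simpa [upd_self] using hφ a i (a i) (b i)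
    have h2 : ‖φ a' - φ b‖ ≤ K * ∑ j ∈ s, ‖a j - b j‖ := by
      have hs : ∑ j ∈ s, ‖a' j - b j‖ = ∑ j ∈ s, ‖a j - b j‖ :=
        Finset.sum_congr rfl fun j hj => by rw [upd_apply_of_ne _ _ _ (ne_of_mem_of_not_mem hj hi)]
      refine hs ▸ IH a' b fun j hj => ?_
      rcases eq_or_ne j i with rfl | hji
      · exact upd_apply_self _ _ _
      · rw [upd_apply_of_ne _ _ _ hji]
        exact hab j (by simp [hji, hj])
    rw [Finset.sum_insert hi, mul_add]
    exact (norm_sub_le_norm_sub_add_norm_sub _ _ _).trans (add_le_add h1 h2)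

end BlockDescent

section ProxGradStep

variable {f : PiLp 2 H → ℝ} {f' : PiLp 2 H → PiLp 2 H} {g : ∀ i, H i → ℝ} {γ : Fin m → ℝ}

/-- The paper's `v^k`, for `x = x^k`, `xh = x̂^k` and `xb = x̄^{k+1}`. -/
def proxGradResidual (γ : Fin m → ℝ) (f' : PiLp 2 H → PiLp 2 H) (x xh xb : PiLp 2 H) :
    PiLp 2 H :=
  WithLp.toLp 2 (fun i => (γ i)⁻¹ • (x i - xb i)) + (f' xb - f' xh)

lemma Fobj_add_inner_proxGradResidual_le [∀ i, CompleteSpace (H i)]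
    (hf : ∀ z, HasGradientAt f (f' z) z) (hf_convex : ConvexOn ℝ univ f)
    (hg : ∀ i, ConvexOn ℝ univ (g i)) (hγ : ∀ i, 0 < γ i) {x xh xb : PiLp 2 H}
    (hprox : ∀ i, IsProx (γ i) (g i) (x i - γ i • f' xh i) (xb i)) (z : PiLp 2 H) :
    Fobj f g xb + ⟪proxGradResidual γ f' x xh xb, z - xb⟫ ≤ Fobj f g z := by
  have hf_part := hf_convex.add_inner_le_of_hasGradientAt (hf xb) z
  have hg_part : ∀ i, g i (xb i) + ⟪(γ i)⁻¹ • (x i - xb i) - f' xh i, z i - xb i⟫ ≤ g i (z i) := by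
    intro i
    have h := (hprox i).add_inner_le (hγ i) (hg i) (z i)
    rwa [← real_inner_smul_left, smul_sub, smul_sub, smul_smul, inv_mul_cancel₀ (hγ i).ne',
      one_smul, sub_right_comm, ← smul_sub] at h
  have hsplit : ⟪proxGradResidual γ f' x xh xb, z - xb⟫
      = ⟪f' xb, z - xb⟫ + ∑ i, ⟪(γ i)⁻¹ • (x i - xb i) - f' xh i, z i - xb i⟫ := by
    simp only [proxGradResidual, PiLp.inner_apply, ← Finset.sum_add_distrib]
    refine Finset.sum_congr rfl fun i _ => ?_
    simp only [PiLp.add_apply, PiLp.sub_apply, inner_add_left, inner_sub_left]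
    ring
  have := Finset.sum_le_sum fun i (_ : i ∈ Finset.univ) => hg_part i
  rw [Finset.sum_add_distrib] at this
  rw [Fobj, Fobj, hsplit]
  linarith

lemma norm_proxGradResidual_le {Lres : ℝ} (hLres : 0 ≤ Lres)
    (hlip : ∀ (z : PiLp 2 H) (i : Fin m) (u u' : H i),
      ‖f' (upd z i u) - f' (upd z i u')‖ ≤ Lres * ‖u - u'‖)
    (γ : Fin m → ℝ) (x xh xb : PiLp 2 H) :
    ‖proxGradResidual γ f' x xh xb‖
      ≤ (∑ i, ‖(γ i)⁻¹‖ + Lres * m) * ‖x - xb‖ + ‖f' x - f' xh‖ := by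
  have h1 : ‖(WithLp.toLp 2 (fun i => (γ i)⁻¹ • (x i - xb i)) : PiLp 2 H)‖
      ≤ (∑ i, ‖(γ i)⁻¹‖) * ‖x - xb‖ := by
    refine (norm_le_sum_norm_apply _).trans ?_
    rw [Finset.sum_mul]
    refine Finset.sum_le_sum fun i _ => ?_
    rw [PiLp.toLp_apply, norm_smul]
    gcongr
    exact PiLp.norm_apply_le (x - xb) i
  have h2 : ‖f' xb - f' x‖ ≤ Lres * m * ‖x - xb‖ := by
    refine (norm_sub_le_mul_sum_norm_sub_apply hlip xb x).trans ?_
    rw [mul_assoc]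
    gcongr
    simpa [norm_sub_rev] using sum_norm_apply_le (x - xb)
  calc ‖proxGradResidual γ f' x xh xb‖
      ≤ ‖(WithLp.toLp 2 (fun i => (γ i)⁻¹ • (x i - xb i)) : PiLp 2 H)‖
        + (‖f' xb - f' x‖ + ‖f' x - f' xh‖) :=
        (norm_add_le _ _).trans (by gcongr; exact norm_sub_le_norm_sub_add_norm_sub _ _ _)
    _ ≤ _ := by linarith

lemma sum_mul_le_div_of_sq_le {ι : Type*} (s : Finset ι) (σ : ι → ℝ) {c r D : ℝ} (hc : 0 < c)
    (hD : c ^ 2 * r ^ 2 ≤ D) :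
    (∑ t ∈ s, σ t) * r ≤ (∑ t ∈ s, σ t ^ 2 + s.card * D) / (2 * c) := by
  rw [le_div_iff₀ (by positivity), Finset.sum_mul, Finset.sum_mul, ← nsmul_eq_mul,
    ← Finset.sum_const, ← Finset.sum_add_distrib]
  refine Finset.sum_le_sum fun t _ => ?_
  nlinarith [two_mul_le_add_sq (σ t) (c * r)]

lemma sum_mul_Fobj_upd_le [∀ i, CompleteSpace (H i)] (hf : ∀ z, HasGradientAt f (f' z) z)
    (hg : ∀ i, ConvexOn ℝ univ (g i)) (hγ : ∀ i, 0 < γ i) {L : Fin m → ℝ} {x xh xb : PiLp 2 H}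
    (hlip : ∀ (i : Fin m) (u u' : H i), ‖f' (upd x i u) i - f' (upd x i u') i‖ ≤ L i * ‖u - u'‖)
    (hprox : ∀ i, IsProx (γ i) (g i) (x i - γ i • f' xh i) (xb i))
    {p : Fin m → ℝ} (hp : ∀ i, 0 ≤ p i) (hp_sum : ∑ i, p i = 1)
    {a : ℝ} (ha : ∀ i, a ≤ (γ i)⁻¹ - L i / 2) :
    ∑ i, p i * Fobj f g (upd x i (xb i))
      ≤ Fobj f g x - a * wnormSq p (xb - x) + winner p (f' x - f' xh) (xb - x) := by
  calc ∑ i, p i * Fobj f g (upd x i (xb i))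
      ≤ ∑ i, (Fobj f g x * p i - a * (p i * ‖xb i - x i‖ ^ 2)
          + p i * ⟪f' x i - f' xh i, xb i - x i⟫) := by
        refine Finset.sum_le_sum fun i _ => ?_
        have := Fobj_upd_le hf (hg i) (hγ i) (hlip i) (hprox i)
        nlinarith [ha i, hp i, mul_nonneg (hp i) (sq_nonneg ‖xb i - x i‖)]
    _ = _ := by
        simp only [Finset.sum_add_distrib, Finset.sum_sub_distrib, ← Finset.mul_sum,
          hp_sum, mul_one, wnormSq, winner, PiLp.sub_apply]

lemma sum_mul_Fobj_upd_le_of_delay [∀ i, CompleteSpace (H i)] (hf : ∀ z, HasGradientAt f (f' z) z)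
    (hg : ∀ i, ConvexOn ℝ univ (g i)) (hγ : ∀ i, 0 < γ i) {L : Fin m → ℝ} {x xh xb : PiLp 2 H}
    (hlip : ∀ (i : Fin m) (u u' : H i), ‖f' (upd x i u) i - f' (upd x i u') i‖ ≤ L i * ‖u - u'‖)
    (hprox : ∀ i, IsProx (γ i) (g i) (x i - γ i • f' xh i) (xb i))
    {p : Fin m → ℝ} (hp_sum : ∑ i, p i = 1) {pmin pmax : ℝ} (hpmin : 0 < pmin)
    (hpmin_le : ∀ i, pmin ≤ p i) (hle_pmax : ∀ i, p i ≤ pmax) (hpmax : 0 ≤ pmax)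
    {a : ℝ} (ha : ∀ i, a ≤ (γ i)⁻¹ - L i / 2) {Lres : ℝ} (hLres : 0 ≤ Lres) {τ : ℕ} {σ : ℕ → ℝ}
    (hdelay : ‖f' x - f' xh‖ ≤ Lres * ∑ t ∈ Finset.range τ, σ t) :
    ∑ i, p i * Fobj f g (upd x i (xb i))
      ≤ Fobj f g x - (a - Lres * pmax / (2 * √pmin) * τ) * wnormSq p (xb - x)
        + Lres * pmax / (2 * √pmin) * ∑ t ∈ Finset.range τ, σ t ^ 2 := by
  have hp : ∀ i, 0 ≤ p i := fun i => hpmin.le.trans (hpmin_le i)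
  have hstep := sum_mul_Fobj_upd_le hf hg hγ hlip hprox hp hp_sum ha
  have hD : √pmin ^ 2 * ‖xb - x‖ ^ 2 ≤ wnormSq p (xb - x) := by
    rw [Real.sq_sqrt hpmin.le]
    exact mul_norm_sq_le_wnormSq hpmin_le _
  have hamgm := sum_mul_le_div_of_sq_le (Finset.range τ) σ (Real.sqrt_pos.2 hpmin) hD
  rw [Finset.card_range] at hamgm
  have hcross : winner p (f' x - f' xh) (xb - x)
      ≤ Lres * pmax / (2 * √pmin) * (∑ t ∈ Finset.range τ, σ t ^ 2 + τ * wnormSq p (xb - x)) :=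
    calc winner p (f' x - f' xh) (xb - x) ≤ pmax * (‖f' x - f' xh‖ * ‖xb - x‖) :=
          winner_le hpmax hp hle_pmax _ _
      _ ≤ pmax * Lres * ((∑ t ∈ Finset.range τ, σ t) * ‖xb - x‖) := by
          rw [mul_assoc pmax Lres, ← mul_assoc Lres]
          gcongr
      _ ≤ pmax * Lres
            * ((∑ t ∈ Finset.range τ, σ t ^ 2 + τ * wnormSq p (xb - x)) / (2 * √pmin)) := by
          gcongr
      _ = _ := by ring
  linarith

lemma div_two_lt_inv_sub_of_mul_add_lt {γ L K : ℝ} (hγ : 0 < γ) (h : γ * (L + K) < 2) :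
    K / 2 < γ⁻¹ - L / 2 := by
  have := (lt_div_iff₀' hγ).2 (by linarith : γ * (K / 2 + L / 2) < 1)
  rw [one_div] at this
  linarith

end ProxGradStep

section Delay

lemma sum_norm_sub_apply_le_sum_norm_sub {z : ℕ → PiLp 2 H}
    (hz : ∀ t, ∃ i, ∀ j ≠ i, z (t + 1) j = z t j) {n : ℕ} {s : Fin m → ℕ} (hs : ∀ j, s j ≤ n) :
    ∑ j, ‖z n j - z (s j) j‖ ≤ ∑ t ∈ Finset.range n, ‖z (t + 1) - z t‖ :=
  calc ∑ j, ‖z n j - z (s j) j‖ ≤ ∑ j, ∑ t ∈ Finset.range n, ‖z (t + 1) j - z t j‖ := by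
        refine Finset.sum_le_sum fun j _ => ?_
        rw [← dist_eq_norm, dist_comm]
        refine (dist_le_Ico_sum_dist (fun t => z t j) (hs j)).trans ?_
        simp only [dist_eq_norm']
        exact Finset.sum_le_sum_of_subset_of_nonneg
          (by rw [Finset.range_eq_Ico]; exact Finset.Ico_subset_Ico_left (Nat.zero_le _))
          fun _ _ _ => norm_nonneg _
    _ = ∑ t ∈ Finset.range n, ‖z (t + 1) - z t‖ := by
        rw [Finset.sum_comm]
        refine Finset.sum_congr rfl fun t _ => ?_
        obtain ⟨i, hi⟩ := hz t
        simpa using sum_norm_apply_eq_norm (u := z (t + 1) - z t) (i := i)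
          fun j hj => by simp [hi j hj]

lemma sum_norm_sub_xhatD_le {y : ℤ → PiLp 2 H} (hy : ∀ h : ℤ, ∃ i, ∀ j ≠ i, y (h + 1) j = y h j)
    {τ : ℕ} {d : ℕ → Fin m → ℕ} (hd : ∀ k j, d k j ≤ τ) (k : ℕ) :
    ∑ j, ‖y k j - xhatD y d k j‖
      ≤ ∑ t ∈ Finset.range τ, ‖y ((k : ℤ) - τ + t + 1) - y ((k : ℤ) - τ + t)‖ := by
  have h := sum_norm_sub_apply_le_sum_norm_sub (z := fun t : ℕ => y ((k : ℤ) - τ + t))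
    (fun t => by simpa [add_assoc] using hy ((k : ℤ) - τ + t)) (n := τ)
    (s := fun j => τ - d k j) fun j => Nat.sub_le _ _
  convert h using 3 with j _ t
  · simp [xhatD, Nat.cast_sub (hd k j)]
  · push_cast
    ring_nf

end Delay

section DelayedDescent

lemma sum_range_succ_mul_shift (τ : ℕ) (w : ℕ → ℝ) :
    ∑ j ∈ Finset.range τ, ((j : ℝ) + 1) * w (j + 1)
      = ∑ j ∈ Finset.range τ, ((j : ℝ) + 1) * w j + τ * w τ - ∑ j ∈ Finset.range τ, w j := by
  have h := Finset.sum_range_succ' (fun j => (j : ℝ) * w j) τ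
  rw [Finset.sum_range_succ] at h
  have h' : ∑ j ∈ Finset.range τ, ((j : ℝ) + 1) * w j
      = ∑ j ∈ Finset.range τ, (j : ℝ) * w j + ∑ j ∈ Finset.range τ, w j := by
    simp only [add_mul, one_mul, Finset.sum_add_distrib]
  push_cast at h
  linarith

lemma mul_sum_le_of_delayed_descent {e d : ℕ → ℝ} {s : ℤ → ℝ} {a C b : ℝ} {τ : ℕ} (hC : 0 ≤ C)
    (hs : ∀ h, 0 ≤ s h) (hs_neg : ∀ h < 0, s h = 0) (hsd : ∀ k : ℕ, s k = d k)
    (he : ∀ k : ℕ, e (k + 1) ≤ e k - a * d k + C * ∑ t ∈ Finset.range τ, s ((k : ℤ) - τ + t))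
    (hb : ∀ k, b ≤ e k) (N : ℕ) :
    (a - C * τ) * ∑ k ∈ Finset.range N, d k ≤ e 0 - b := by
  -- the weights `j + 1` make the delayed error terms telescope
  set V : ℕ → ℝ := fun k => e k + C * ∑ j ∈ Finset.range τ, ((j : ℝ) + 1) * s ((k : ℤ) - τ + j)
  have hV : ∀ k, V (k + 1) ≤ V k - (a - C * τ) * d k := by
    intro k
    have hshift := sum_range_succ_mul_shift τ fun j => s ((k : ℤ) - τ + j)
    simp only [Nat.cast_add, Nat.cast_one, ← add_assoc, sub_add_cancel, hsd] at hshift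
    simp only [V, Nat.cast_add, Nat.cast_one,
      show ∀ j : ℤ, (k : ℤ) + 1 - τ + j = (k : ℤ) - τ + j + 1 from fun j => by ring, hshift]
    linarith [he k]
  have hV0 : V 0 = e 0 := by
    simp only [V]
    rw [Finset.sum_eq_zero fun j hj => by
      rw [hs_neg _ (by simp at hj ⊢; omega), mul_zero], mul_zero, add_zero]
  have hVN : b ≤ V N := le_add_of_le_of_nonneg (hb N) <| mul_nonneg hC <|
    Finset.sum_nonneg fun j _ => mul_nonneg (by positivity) (hs _)
  have htel : ∀ N, V N ≤ V 0 - (a - C * τ) * ∑ k ∈ Finset.range N, d k := by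
    intro N
    induction N with
    | zero => simp
    | succ N ih => rw [Finset.sum_range_succ]; linarith [hV N]
  linarith [htel N]

end DelayedDescent

section Sampling

def pastIndices {Ω : Type*} (idx : ℕ → Ω → Fin m) (k : ℕ) (ω : Ω) : Finset.range k → Fin m :=
  fun j => idx j ω

lemma Function.FactorsThrough.pastIndices_mono {Ω β : Type*} {idx : ℕ → Ω → Fin m} {φ : Ω → β}
    {n k : ℕ} (hnk : n ≤ k)
    (hφ : φ.FactorsThrough (pastIndices idx n)) : φ.FactorsThrough (pastIndices idx k) :=
  fun _ _ h => hφ <| funext fun j => congrFun h ⟨j, Finset.range_mono hnk j.2⟩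

variable {Ω : Type*} [MeasurableSpace Ω] {P : Measure Ω} {idx : ℕ → Ω → Fin m}

lemma measurable_pastIndices (hidx : ∀ k, Measurable (idx k)) (k : ℕ) :
    Measurable (pastIndices idx k) :=
  measurable_pi_lambda _ fun j => hidx j

lemma Function.FactorsThrough.integrable {ι : Type*} [Finite ι] [MeasurableSpace ι]
    [MeasurableSingletonClass ι] {S : Ω → ι} (hS : Measurable S) {φ : Ω → ℝ}
    (hφ : φ.FactorsThrough S) [IsFiniteMeasure P] : Integrable φ P := by
  rw [← hφ.extend_comp fun _ => 0]
  exact Integrable.of_finite.comp_measurable hS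

lemma indepFun_pastIndices (hidx : ∀ k, Measurable (idx k)) (hiid : iIndepFun idx P) (k : ℕ) :
    IndepFun (pastIndices idx k) (idx k) P :=
  (hiid.indepFun_finset (Finset.range k) {k} (by simp) hidx).comp measurable_id
    (measurable_pi_apply (⟨k, Finset.mem_singleton_self k⟩ : ({k} : Finset ℕ)))

lemma sum_eq_one_of_law [IsProbabilityMeasure P] (hidx : ∀ k, Measurable (idx k))
    {p : Fin m → ℝ} (hp : ∀ i, 0 ≤ p i)
    (hlaw : ∀ (k : ℕ) (i : Fin m), P {ω | idx k ω = i} = ENNReal.ofReal (p i)) :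
    ∑ i, p i = 1 := by
  have h := sum_measure_preimage_singleton (μ := P) Finset.univ (f := idx 0)
    fun i _ => hidx 0 (measurableSet_singleton i)
  simp only [Finset.coe_univ, Set.preimage_univ, measure_univ] at h
  rw [← ENNReal.ofReal_eq_one, ENNReal.ofReal_sum_of_nonneg fun i _ => hp i, ← h]
  exact Finset.sum_congr rfl fun i _ => (hlaw 0 i).symm

lemma integral_apply_idx_eq [IsProbabilityMeasure P] (hidx : ∀ k, Measurable (idx k))
    (hiid : iIndepFun idx P) {p : Fin m → ℝ} (hp : ∀ i, 0 ≤ p i)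
    (hlaw : ∀ (k : ℕ) (i : Fin m), P {ω | idx k ω = i} = ENNReal.ofReal (p i)) (k : ℕ)
    (Φ : Ω → Fin m → ℝ) (hΦ : ∀ i, (Φ · i).FactorsThrough (pastIndices idx k)) :
    ∫ ω, Φ ω (idx k ω) ∂P = ∫ ω, ∑ i, p i * Φ ω i ∂P := by
  have hS := measurable_pastIndices hidx k
  have hint : ∀ i, Integrable (Φ · i) P := fun i => (hΦ i).integrable hS
  have hind : ∀ i, Integrable (fun ω => Φ ω i * ({i} : Set (Fin m)).indicator 1 (idx k ω)) P :=
    fun i => (hint i).mul_bdd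
      ((measurable_of_finite (({i} : Set (Fin m)).indicator 1)).comp (hidx k)).aestronglyMeasurable
      (c := 1) (ae_of_all _ fun ω => by by_cases h : idx k ω = i <;> simp [h])
  have hprod : ∀ i, ∫ ω, Φ ω i * ({i} : Set (Fin m)).indicator 1 (idx k ω) ∂P
      = p i * ∫ ω, Φ ω i ∂P := by
    intro i
    obtain ⟨ψ, hψ⟩ : ∃ ψ : (Finset.range k → Fin m) → ℝ, ∀ ω, Φ ω i = ψ (pastIndices idx k ω) :=
      ⟨_, fun ω => (congrFun ((hΦ i).extend_comp fun _ => 0) ω).symm⟩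
    simp only [hψ]
    rw [(indepFun_pastIndices hidx hiid k).integral_fun_comp_mul_comp hS.aemeasurable
      (hidx k).aemeasurable (measurable_of_finite _).aestronglyMeasurable
      (measurable_of_finite _).aestronglyMeasurable, mul_comm]
    congr 1
    rw [show (fun ω => ({i} : Set (Fin m)).indicator (1 : Fin m → ℝ) (idx k ω))
        = (idx k ⁻¹' {i}).indicator 1 from rfl,
      integral_indicator_one (hidx k (measurableSet_singleton i)), measureReal_def]
    exact (congrArg ENNReal.toReal (hlaw k i)).trans (ENNReal.toReal_ofReal (hp i))
  calc ∫ ω, Φ ω (idx k ω) ∂P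
      = ∫ ω, ∑ i, Φ ω i * ({i} : Set (Fin m)).indicator 1 (idx k ω) ∂P := by
        congr 1
        ext ω
        simp [Set.indicator_apply]
    _ = ∫ ω, ∑ i, p i * Φ ω i ∂P := by
        rw [integral_finsetSum _ fun i _ => hind i,
          integral_finsetSum _ fun i _ => (hint i).const_mul _]
        simp only [hprod, integral_const_mul]

lemma ae_summable_of_sum_integral_le {D : ℕ → Ω → ℝ} (hD : ∀ k ω, 0 ≤ D k ω)
    (hint : ∀ k, Integrable (D k) P) {B : ℝ}
    (hB : ∀ N, ∑ k ∈ Finset.range N, ∫ ω, D k ω ∂P ≤ B) :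
    ∀ᵐ ω ∂P, Summable fun k => D k ω := by
  have hmeas : ∀ k, AEMeasurable (fun ω => ENNReal.ofReal (D k ω)) P :=
    fun k => (hint k).aemeasurable.ennreal_ofReal
  have hlint : ∫⁻ ω, ∑' k, ENNReal.ofReal (D k ω) ∂P ≠ ⊤ := by
    rw [lintegral_tsum hmeas, ENNReal.tsum_eq_iSup_nat]
    refine ne_top_of_le_ne_top (ENNReal.ofReal_ne_top (r := B)) (iSup_le fun N => ?_)
    rw [← Finset.sum_congr rfl fun k _ =>
        ofReal_integral_eq_lintegral_ofReal (hint k) (ae_of_all _ (hD k)),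
      ← ENNReal.ofReal_sum_of_nonneg fun k _ => integral_nonneg (hD k)]
    exact ENNReal.ofReal_le_ofReal (hB N)
  filter_upwards [ae_lt_top' (AEMeasurable.tsum hmeas) hlint] with ω hω
  exact (ENNReal.summable_toReal hω.ne).congr fun k => ENNReal.toReal_ofReal (hD k ω)

end Sampling

/-- The iterates of the algorithm; `xbar k` is the paper's `x̄^{k+1}`. -/
structure IsAsyncFBTrajectory {Ω : Type*} (idx : ℕ → Ω → Fin m) (d : ℕ → Fin m → ℕ)
    (γ : Fin m → ℝ) (f' : PiLp 2 H → PiLp 2 H) (g : ∀ i, H i → ℝ) (x0 : PiLp 2 H)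
    (x : ℤ → Ω → PiLp 2 H) (xbar : ℕ → Ω → PiLp 2 H) : Prop where
  init : ∀ n : ℤ, n ≤ 0 → ∀ ω : Ω, x n ω = x0
  prox : ∀ (k : ℕ) (ω : Ω) (i : Fin m),
    IsProx (γ i) (g i) (x (k : ℤ) ω i - γ i • f' (xhatP x d k ω) i) (xbar k ω i)
  update : ∀ (k : ℕ) (ω : Ω),
    x ((k : ℤ) + 1) ω = upd (x (k : ℤ) ω) (idx k ω) (xbar k ω (idx k ω))

namespace IsAsyncFBTrajectory

variable {Ω : Type*} {idx : ℕ → Ω → Fin m} {d : ℕ → Fin m → ℕ} {γ : Fin m → ℝ}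
  {f' : PiLp 2 H → PiLp 2 H} {g : ∀ i, H i → ℝ} {x0 : PiLp 2 H} {x : ℤ → Ω → PiLp 2 H}
  {xbar : ℕ → Ω → PiLp 2 H}

lemma exists_forall_ne_apply_eq (hA : IsAsyncFBTrajectory idx d γ f' g x0 x xbar) (ω : Ω)
    (h : ℤ) : ∃ i, ∀ j ≠ i, x (h + 1) ω j = x h ω j := by
  rcases lt_or_ge h 0 with hneg | hnonneg
  · exact ⟨idx 0 ω, fun j _ => by rw [hA.init _ (by omega), hA.init _ hneg.le]⟩
  · lift h to ℕ using hnonneg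
    exact ⟨idx h ω, fun j hj => by rw [hA.update, upd_apply_of_ne _ _ _ hj]⟩

lemma norm_succ_sub_le (hA : IsAsyncFBTrajectory idx d γ f' g x0 x xbar) (ω : Ω) (h : ℤ) :
    ‖x (h + 1) ω - x h ω‖ ≤ ‖x h.toNat ω - xbar h.toNat ω‖ := by
  rcases lt_or_ge h 0 with hneg | hnonneg
  · rw [hA.init _ (by omega), hA.init _ hneg.le, sub_self, norm_zero]
    exact norm_nonneg _
  · lift h to ℕ using hnonneg
    rw [Int.toNat_natCast, hA.update, norm_upd_sub_self, norm_sub_rev]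
    exact PiLp.norm_apply_le (x h ω - xbar h ω) _

lemma norm_sub_delayed_le (hA : IsAsyncFBTrajectory idx d γ f' g x0 x xbar) {Lres : ℝ}
    (hLres : 0 ≤ Lres)
    (hlip : ∀ (z : PiLp 2 H) (i : Fin m) (u u' : H i),
      ‖f' (upd z i u) - f' (upd z i u')‖ ≤ Lres * ‖u - u'‖)
    {τ : ℕ} (hd : ∀ k j, d k j ≤ τ) (k : ℕ) (ω : Ω) :
    ‖f' (x k ω) - f' (xhatP x d k ω)‖
      ≤ Lres * ∑ t ∈ Finset.range τ, ‖x ((k : ℤ) - τ + t + 1) ω - x ((k : ℤ) - τ + t) ω‖ :=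
  (norm_sub_le_mul_sum_norm_sub_apply hlip _ _).trans <| mul_le_mul_of_nonneg_left
    (sum_norm_sub_xhatD_le (y := fun n => x n ω) (hA.exists_forall_ne_apply_eq ω) hd k) hLres

lemma factorsThrough_xbar (hA : IsAsyncFBTrajectory idx d γ f' g x0 x xbar) {k : ℕ}
    (hx : ∀ n : ℤ, n ≤ k → (x n).FactorsThrough (pastIndices idx k)) :
    (xbar k).FactorsThrough (pastIndices idx k) := by
  intro ω ω' h
  have hxk : x k ω = x k ω' := hx k le_rfl h
  have hxh : xhatP x d k ω = xhatP x d k ω' := by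
    ext j
    exact congrArg (· j) (hx ((k : ℤ) - d k j) (by omega) h)
  ext i
  exact (hA.prox k ω i).eq (by rw [hxk, hxh]; exact hA.prox k ω' i)

lemma factorsThrough_x (hA : IsAsyncFBTrajectory idx d γ f' g x0 x xbar) (k : ℕ) :
    ∀ n : ℤ, n ≤ k → (x n).FactorsThrough (pastIndices idx k) := by
  induction k with
  | zero =>
    intro n hn ω ω' _
    rw [hA.init n (by exact_mod_cast hn), hA.init n (by exact_mod_cast hn)]
  | succ k ih =>
    intro n hn
    rcases (show n ≤ k ∨ n = (k : ℤ) + 1 by omega) with hle | rfl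
    · exact (ih n hle).pastIndices_mono k.le_succ
    · intro ω ω' h
      have h' := fun n hn => ((ih n hn).pastIndices_mono k.le_succ) h
      have hidx : idx k ω = idx k ω' := congrFun h ⟨k, by simp⟩
      rw [hA.update, hA.update, hidx, h' k le_rfl,
        ((hA.factorsThrough_xbar ih).pastIndices_mono k.le_succ) h]

variable [MeasurableSpace Ω] {P : Measure Ω} {f : PiLp 2 H → ℝ}

lemma integrable_sq_norm_succ_sub (hA : IsAsyncFBTrajectory idx d γ f' g x0 x xbar)
    [IsFiniteMeasure P] (hidx : ∀ k, Measurable (idx k)) (h : ℤ) :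
    Integrable (fun ω => ‖x (h + 1) ω - x h ω‖ ^ 2) P :=
  Function.FactorsThrough.integrable (measurable_pastIndices hidx (h.toNat + 1))
    fun ω ω' hω => by
      rw [hA.factorsThrough_x _ (h + 1) (by omega) hω, hA.factorsThrough_x _ h (by omega) hω]

lemma integrable_comp_x (hA : IsAsyncFBTrajectory idx d γ f' g x0 x xbar) [IsFiniteMeasure P]
    (hidx : ∀ k, Measurable (idx k)) (φ : PiLp 2 H → ℝ) (k : ℕ) :
    Integrable (fun ω => φ (x k ω)) P :=
  Function.FactorsThrough.integrable (measurable_pastIndices hidx k) fun ω ω' hω => by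
    simp only [hA.factorsThrough_x k k le_rfl hω]

lemma integrable_wnormSq (hA : IsAsyncFBTrajectory idx d γ f' g x0 x xbar) [IsFiniteMeasure P]
    (hidx : ∀ k, Measurable (idx k)) (p : Fin m → ℝ) (k : ℕ) :
    Integrable (fun ω => wnormSq p (xbar k ω - x k ω)) P :=
  Function.FactorsThrough.integrable (measurable_pastIndices hidx k) fun ω ω' hω => by
    simp only [hA.factorsThrough_x k k le_rfl hω, hA.factorsThrough_xbar (hA.factorsThrough_x k) hω]

lemma integral_sq_norm_succ_sub (hA : IsAsyncFBTrajectory idx d γ f' g x0 x xbar)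
    [IsProbabilityMeasure P] (hidx : ∀ k, Measurable (idx k)) (hiid : iIndepFun idx P)
    {p : Fin m → ℝ} (hp : ∀ i, 0 ≤ p i)
    (hlaw : ∀ (k : ℕ) (i : Fin m), P {ω | idx k ω = i} = ENNReal.ofReal (p i)) (n : ℕ) :
    ∫ ω, ‖x ((n : ℤ) + 1) ω - x n ω‖ ^ 2 ∂P = ∫ ω, wnormSq p (xbar n ω - x n ω) ∂P := by
  have hx := hA.factorsThrough_x n n le_rfl
  have hxbar := hA.factorsThrough_xbar (hA.factorsThrough_x n)
  have h := integral_apply_idx_eq hidx hiid hp hlaw n (fun ω i => ‖xbar n ω i - x n ω i‖ ^ 2)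
    fun i ω ω' hω => by simp only [hx hω, hxbar hω]
  simp only [hA.update, norm_upd_sub_self] at h ⊢
  exact h

lemma integral_Fobj_succ_le (hA : IsAsyncFBTrajectory idx d γ f' g x0 x xbar)
    [IsProbabilityMeasure P] [∀ i, CompleteSpace (H i)] (hidx : ∀ k, Measurable (idx k))
    (hiid : iIndepFun idx P) {p : Fin m → ℝ}
    (hlaw : ∀ (k : ℕ) (i : Fin m), P {ω | idx k ω = i} = ENNReal.ofReal (p i))
    (hf : ∀ z, HasGradientAt f (f' z) z) (hg : ∀ i, ConvexOn ℝ univ (g i))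
    (hγ : ∀ i, 0 < γ i) {L : Fin m → ℝ}
    (hlip_blk : ∀ (z : PiLp 2 H) (i : Fin m) (u u' : H i),
      ‖f' (upd z i u) i - f' (upd z i u') i‖ ≤ L i * ‖u - u'‖)
    {Lres : ℝ} (hLres : 0 ≤ Lres)
    (hlip_res : ∀ (z : PiLp 2 H) (i : Fin m) (u u' : H i),
      ‖f' (upd z i u) - f' (upd z i u')‖ ≤ Lres * ‖u - u'‖)
    {τ : ℕ} (hd : ∀ k j, d k j ≤ τ) {pmin pmax : ℝ} (hpmin : 0 < pmin)
    (hpmin_le : ∀ i, pmin ≤ p i) (hle_pmax : ∀ i, p i ≤ pmax) (hpmax : 0 ≤ pmax)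
    {a : ℝ} (ha : ∀ i, a ≤ (γ i)⁻¹ - L i / 2) (k : ℕ) :
    ∫ ω, Fobj f g (x ((k : ℤ) + 1) ω) ∂P
      ≤ ∫ ω, Fobj f g (x k ω) ∂P
        - (a - Lres * pmax / (2 * √pmin) * τ) * ∫ ω, wnormSq p (xbar k ω - x k ω) ∂P
        + Lres * pmax / (2 * √pmin)
          * ∑ t ∈ Finset.range τ,
              ∫ ω, ‖x ((k : ℤ) - τ + t + 1) ω - x ((k : ℤ) - τ + t) ω‖ ^ 2 ∂P := by
  have hp : ∀ i, 0 ≤ p i := fun i => hpmin.le.trans (hpmin_le i)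
  have hS := measurable_pastIndices hidx k
  have hx := hA.factorsThrough_x k k le_rfl
  have hxbar := hA.factorsThrough_xbar (hA.factorsThrough_x k)
  have hF := hA.integrable_comp_x (P := P) hidx (Fobj f g) k
  have hD := hA.integrable_wnormSq (P := P) hidx p k
  have hnext : Integrable (fun ω => ∑ i, p i * Fobj f g (upd (x k ω) i (xbar k ω i))) P :=
    Function.FactorsThrough.integrable hS fun ω ω' hω => by simp only [hx hω, hxbar hω]
  have hσ := fun t : ℕ => hA.integrable_sq_norm_succ_sub hidx (P := P) ((k : ℤ) - τ + t)
  have hmean : ∫ ω, Fobj f g (x ((k : ℤ) + 1) ω) ∂P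
      = ∫ ω, ∑ i, p i * Fobj f g (upd (x k ω) i (xbar k ω i)) ∂P := by
    simp only [hA.update]
    exact integral_apply_idx_eq hidx hiid hp hlaw k
      (fun ω i => Fobj f g (upd (x k ω) i (xbar k ω i)))
      fun i ω ω' hω => by simp only [hx hω, hxbar hω]
  have h1 : Integrable (fun ω => Fobj f g (x k ω)
      - (a - Lres * pmax / (2 * √pmin) * τ) * wnormSq p (xbar k ω - x k ω)) P :=
    hF.sub (hD.const_mul _)
  have h2 : Integrable (fun ω => Lres * pmax / (2 * √pmin)
      * ∑ t ∈ Finset.range τ, ‖x ((k : ℤ) - τ + t + 1) ω - x ((k : ℤ) - τ + t) ω‖ ^ 2) P :=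
    (integrable_finsetSum _ fun t _ => hσ t).const_mul _
  rw [hmean]
  refine (integral_mono hnext (h1.add h2) fun ω => ?_).trans_eq ?_
  · exact sum_mul_Fobj_upd_le_of_delay hf hg hγ (hlip_blk (x k ω)) (hA.prox k ω)
      (sum_eq_one_of_law hidx hp hlaw) hpmin hpmin_le hle_pmax hpmax ha hLres
      (hA.norm_sub_delayed_le hLres hlip_res hd k ω)
  · rw [integral_add' h1 h2, integral_sub hF (hD.const_mul _), integral_const_mul,
      integral_const_mul, integral_finsetSum _ fun t _ => hσ t]

lemma ae_summable_wnormSq (hA : IsAsyncFBTrajectory idx d γ f' g x0 x xbar)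
    [IsProbabilityMeasure P] [∀ i, CompleteSpace (H i)] (hidx : ∀ k, Measurable (idx k))
    (hiid : iIndepFun idx P) {p : Fin m → ℝ}
    (hlaw : ∀ (k : ℕ) (i : Fin m), P {ω | idx k ω = i} = ENNReal.ofReal (p i))
    (hf : ∀ z, HasGradientAt f (f' z) z) (hg : ∀ i, ConvexOn ℝ univ (g i))
    (hγ : ∀ i, 0 < γ i) {L : Fin m → ℝ}
    (hlip_blk : ∀ (z : PiLp 2 H) (i : Fin m) (u u' : H i),
      ‖f' (upd z i u) i - f' (upd z i u') i‖ ≤ L i * ‖u - u'‖)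
    {Lres : ℝ} (hLres : 0 ≤ Lres)
    (hlip_res : ∀ (z : PiLp 2 H) (i : Fin m) (u u' : H i),
      ‖f' (upd z i u) - f' (upd z i u')‖ ≤ Lres * ‖u - u'‖)
    {τ : ℕ} (hd : ∀ k j, d k j ≤ τ) {pmin pmax : ℝ} (hpmin : 0 < pmin)
    (hpmin_le : ∀ i, pmin ≤ p i) (hle_pmax : ∀ i, p i ≤ pmax) (hpmax : 0 ≤ pmax)
    {a : ℝ} (ha : ∀ i, a ≤ (γ i)⁻¹ - L i / 2) (hmargin : 2 * (Lres * pmax / (2 * √pmin)) * τ < a)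
    {Fstar : ℝ} (hFstar : ∀ z, Fstar ≤ Fobj f g z) :
    ∀ᵐ ω ∂P, Summable fun k => wnormSq p (xbar k ω - x k ω) := by
  set C := Lres * pmax / (2 * √pmin)
  have hp : ∀ i, 0 ≤ p i := fun i => hpmin.le.trans (hpmin_le i)
  have hdesc := mul_sum_le_of_delayed_descent (a := a - C * τ) (C := C) (b := Fstar)
    (e := fun k : ℕ => ∫ ω, Fobj f g (x k ω) ∂P)
    (d := fun k => ∫ ω, wnormSq p (xbar k ω - x k ω) ∂P)
    (s := fun h : ℤ => ∫ ω, ‖x (h + 1) ω - x h ω‖ ^ 2 ∂P) (by positivity)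
    (fun h => integral_nonneg fun ω => sq_nonneg _)
    (fun h hh => by simp [hA.init h hh.le, hA.init (h + 1) (by omega)])
    (hA.integral_sq_norm_succ_sub hidx hiid hp hlaw)
    (fun k => by
      simpa using hA.integral_Fobj_succ_le hidx hiid hlaw hf hg hγ hlip_blk hLres hlip_res hd
        hpmin hpmin_le hle_pmax hpmax ha k)
    (fun k => by
      simpa using integral_mono (μ := P) (integrable_const Fstar) (hA.integrable_comp_x hidx _ k)
        fun ω => hFstar _)
  have he0 : ∫ ω, Fobj f g (x (0 : ℕ) ω) ∂P = Fobj f g x0 := by simp [hA.init 0 le_rfl]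
  refine ae_summable_of_sum_integral_le (fun k ω => Finset.sum_nonneg fun i _ =>
    mul_nonneg (hp i) (sq_nonneg _)) (hA.integrable_wnormSq hidx p)
    (B := (Fobj f g x0 - Fstar) / (a - 2 * C * τ)) fun N => ?_
  rw [le_div_iff₀ (by linarith)]
  have := hdesc N
  simp only [he0] at this
  linarith

lemma tendsto_proxGradResidual (hA : IsAsyncFBTrajectory idx d γ f' g x0 x xbar) {Lres : ℝ}
    (hLres : 0 ≤ Lres)
    (hlip : ∀ (z : PiLp 2 H) (i : Fin m) (u u' : H i),
      ‖f' (upd z i u) - f' (upd z i u')‖ ≤ Lres * ‖u - u'‖)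
    {τ : ℕ} (hd : ∀ k j, d k j ≤ τ) {ω : Ω}
    (hu : Tendsto (fun k : ℕ => ‖x k ω - xbar k ω‖) atTop (𝓝 0)) :
    Tendsto (fun k : ℕ => proxGradResidual γ f' (x k ω) (xhatP x d k ω) (xbar k ω))
      atTop (𝓝 0) := by
  have hstep : ∀ t : ℕ,
      Tendsto (fun k : ℕ => ‖x ((k : ℤ) - τ + t + 1) ω - x ((k : ℤ) - τ + t) ω‖) atTop (𝓝 0) :=
    fun t => squeeze_zero (fun _ => norm_nonneg _) (fun k => hA.norm_succ_sub_le ω _)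
      (hu.comp (tendsto_atTop_atTop.2 fun b => ⟨b + τ, fun k hk => by omega⟩))
  rw [tendsto_zero_iff_norm_tendsto_zero]
  refine squeeze_zero (fun _ => norm_nonneg _) (fun k => (norm_proxGradResidual_le hLres hlip γ
    _ _ _).trans (add_le_add le_rfl (hA.norm_sub_delayed_le hLres hlip hd k ω))) ?_
  simpa using (hu.const_mul _).add
    ((tendsto_finsetSum (Finset.range τ) fun t _ => hstep t).const_mul Lres)

end IsAsyncFBTrajectory

theorem stmt10_general
    [∀ i, CompleteSpace (H i)]
    {Ω : Type*} [MeasurableSpace Ω] (P : Measure Ω) [IsProbabilityMeasure P]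
    (idx : ℕ → Ω → Fin m) (hidx_meas : ∀ k : ℕ, Measurable (idx k))
    (hidx_iid : iIndepFun idx P)
    (p : Fin m → ℝ) (hp_pos : ∀ i, 0 < p i)
    (hp_law : ∀ (k : ℕ) (i : Fin m), P {ω | idx k ω = i} = ENNReal.ofReal (p i))
    (τ : ℕ) (d : ℕ → Fin m → ℕ) (hd : ∀ (k : ℕ) (j : Fin m), d k j ≤ min k τ)
    (γ : Fin m → ℝ) (hγ_pos : ∀ i, 0 < γ i)
    (f : PiLp 2 H → ℝ) (f' : PiLp 2 H → PiLp 2 H)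
    (hf_grad : ∀ z : PiLp 2 H, HasGradientAt f (f' z) z)
    (hf_convex : ConvexOn ℝ Set.univ f)
    (Lres : ℝ) (hLres_pos : 0 < Lres) (L : Fin m → ℝ)
    (hf_lip_res : ∀ (z : PiLp 2 H) (i : Fin m) (u u' : H i),
      ‖f' (upd z i u) - f' (upd z i u')‖ ≤ Lres * ‖u - u'‖)
    (hf_lip_blk : ∀ (z : PiLp 2 H) (i : Fin m) (u u' : H i),
      ‖f' (upd z i u) i - f' (upd z i u') i‖ ≤ L i * ‖u - u'‖)
    (g : ∀ i, H i → ℝ) (hg_convex : ∀ i, ConvexOn ℝ Set.univ (g i))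
    (Fstar : ℝ) (hFstar : IsLeast (Set.range (Fobj f g)) Fstar)
    (x : ℤ → Ω → PiLp 2 H) (x0 : PiLp 2 H)
    (hx_init : ∀ n : ℤ, n ≤ 0 → ∀ ω : Ω, x n ω = x0)
    (xbar : ℕ → Ω → PiLp 2 H)
    (hxbar_prox : ∀ (k : ℕ) (ω : Ω) (i : Fin m),
      IsProx (γ i) (g i) (x (k : ℤ) ω i - γ i • f' (xhatP x d k ω) i) (xbar k ω i))
    (hx_update : ∀ (k : ℕ) (ω : Ω),
      x ((k : ℤ) + 1) ω = upd (x (k : ℤ) ω) (idx k ω) (xbar k ω (idx k ω)))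
    (pmax pmin : ℝ)
    (hpmax : IsGreatest (Set.range p) pmax) (hpmin : IsLeast (Set.range p) pmin)
    (δ : ℝ)
    (hδ : IsGreatest
      (Set.range fun i => γ i * (L i + 2 * τ * Lres * pmax / Real.sqrt pmin)) δ)
    (hδ_lt : δ < 2)
 :
    ∃ v : ℕ → Ω → PiLp 2 H,
      ∀ᵐ ω ∂P,
        (∀ (k : ℕ) (z : PiLp 2 H),
          Fobj f g (xbar k ω) + ⟪v k ω, z - xbar k ω⟫ ≤ Fobj f g z) ∧
        Tendsto (fun k : ℕ => v k ω) atTop (𝓝 0) ∧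
        Tendsto (fun k : ℕ => x (k : ℤ) ω - xbar k ω) atTop (𝓝 0) := by
  have hA : IsAsyncFBTrajectory idx d γ f' g x0 x xbar := ⟨hx_init, hxbar_prox, hx_update⟩
  obtain ⟨i₀, hi₀⟩ := hpmin.1
  have hpmin_pos : 0 < pmin := hi₀ ▸ hp_pos i₀
  have hpmin_le : ∀ i, pmin ≤ p i := fun i => hpmin.2 ⟨i, rfl⟩
  have hle_pmax : ∀ i, p i ≤ pmax := fun i => hpmax.2 ⟨i, rfl⟩
  have hd' : ∀ k j, d k j ≤ τ := fun k j => (hd k j).trans (min_le_right _ _)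
  have : Nonempty (Fin m) := ⟨i₀⟩
  obtain ⟨i₁, hi₁⟩ := Finite.exists_min fun i => (γ i)⁻¹ - L i / 2
  have hmargin : 2 * (Lres * pmax / (2 * √pmin)) * τ < (γ i₁)⁻¹ - L i₁ / 2 := by
    convert div_two_lt_inv_sub_of_mul_add_lt (hγ_pos i₁) ((hδ.2 ⟨i₁, rfl⟩).trans_lt hδ_lt) using 1
    ring
  have hsum := hA.ae_summable_wnormSq hidx_meas hidx_iid hp_law hf_grad hg_convex hγ_pos
    hf_lip_blk hLres_pos.le hf_lip_res hd' hpmin_pos hpmin_le hle_pmax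
    (hpmin_pos.le.trans ((hpmin_le i₀).trans (hle_pmax i₀))) hi₁ hmargin fun z => hFstar.2 ⟨z, rfl⟩
  refine ⟨fun k ω => proxGradResidual γ f' (x k ω) (xhatP x d k ω) (xbar k ω), ?_⟩
  filter_upwards [hsum] with ω hω
  have hu : Tendsto (fun k : ℕ => ‖x k ω - xbar k ω‖) atTop (𝓝 0) := by
    simpa only [norm_sub_rev] using tendsto_norm_of_summable_wnormSq hpmin_pos hpmin_le hω
  exact ⟨fun k => Fobj_add_inner_proxGradResidual_le hf_grad hf_convex hg_convex hγ_pos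
      (hA.prox k ω), hA.tendsto_proxGradResidual hLres_pos.le hf_lip_res hd' hu,
    tendsto_zero_iff_norm_tendsto_zero.2 hu⟩

/-- Proposition: vanishing subgradients at the virtual iterates. -/
theorem stmt10
    [∀ i, CompleteSpace (H i)] [∀ i, TopologicalSpace.SeparableSpace (H i)]
    (hm : 0 < m)
    {Ω : Type*} [MeasurableSpace Ω] (P : Measure Ω) [IsProbabilityMeasure P]
    (idx : ℕ → Ω → Fin m) (hidx_meas : ∀ k : ℕ, Measurable (idx k))
    (hidx_iid : iIndepFun idx P)
    (p : Fin m → ℝ) (hp_pos : ∀ i, 0 < p i)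
    (hp_law : ∀ (k : ℕ) (i : Fin m), P {ω | idx k ω = i} = ENNReal.ofReal (p i))
    (τ : ℕ) (d : ℕ → Fin m → ℕ) (hd : ∀ (k : ℕ) (j : Fin m), d k j ≤ min k τ)
    (γ : Fin m → ℝ) (hγ_pos : ∀ i, 0 < γ i)
    (f : PiLp 2 H → ℝ) (f' : PiLp 2 H → PiLp 2 H)
    (hf_grad : ∀ z : PiLp 2 H, HasGradientAt f (f' z) z)
    (hf_convex : ConvexOn ℝ Set.univ f)
    (Lres : ℝ) (hLres_pos : 0 < Lres) (L : Fin m → ℝ)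
    (hf_lip_res : ∀ (z : PiLp 2 H) (i : Fin m) (u u' : H i),
      ‖f' (upd z i u) - f' (upd z i u')‖ ≤ Lres * ‖u - u'‖)
    (hf_lip_blk : ∀ (z : PiLp 2 H) (i : Fin m) (u u' : H i),
      ‖f' (upd z i u) i - f' (upd z i u') i‖ ≤ L i * ‖u - u'‖)
    (g : ∀ i, H i → ℝ) (hg_convex : ∀ i, ConvexOn ℝ Set.univ (g i))
    (hg_lsc : ∀ i, LowerSemicontinuous (g i))
    (Fstar : ℝ) (hFstar : IsLeast (Set.range (Fobj f g)) Fstar)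
    (x : ℤ → Ω → PiLp 2 H) (x0 : PiLp 2 H)
    (hx_init : ∀ n : ℤ, n ≤ 0 → ∀ ω : Ω, x n ω = x0)
    (xbar : ℕ → Ω → PiLp 2 H)
    (hxbar_prox : ∀ (k : ℕ) (ω : Ω) (i : Fin m),
      IsProx (γ i) (g i) (x (k : ℤ) ω i - γ i • f' (xhatP x d k ω) i) (xbar k ω i))
    (hx_update : ∀ (k : ℕ) (ω : Ω),
      x ((k : ℤ) + 1) ω = upd (x (k : ℤ) ω) (idx k ω) (xbar k ω (idx k ω)))
    (pmax pmin : ℝ)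
    (hpmax : IsGreatest (Set.range p) pmax) (hpmin : IsLeast (Set.range p) pmin)
    (δ : ℝ)
    (hδ : IsGreatest
      (Set.range fun i => γ i * (L i + 2 * τ * Lres * pmax / Real.sqrt pmin)) δ)
    (hδ_lt : δ < 2)
 :
    ∃ v : ℕ → Ω → PiLp 2 H,
      ∀ᵐ ω ∂P,
        (∀ (k : ℕ) (z : PiLp 2 H),
          Fobj f g (xbar k ω) + ⟪v k ω, z - xbar k ω⟫ ≤ Fobj f g z) ∧
        Tendsto (fun k : ℕ => v k ω) atTop (𝓝 0) ∧
        Tendsto (fun k : ℕ => x (k : ℤ) ω - xbar k ω) atTop (𝓝 0) :=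
  stmt10_general P idx hidx_meas hidx_iid p hp_pos hp_law τ d hd γ hγ_pos f f' hf_grad hf_convex
    Lres hLres_pos L hf_lip_res hf_lip_blk g hg_convex Fstar hFstar x x0 hx_init xbar hxbar_prox
    hx_update pmax pmin hpmax hpmin δ hδ hδ_lt
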